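/- Let (S_ξ)_{ξ∈Ξ} be a nondegenerate family of nonzero symmetric gauges in ℝ^N. A gauge S ⊆ ℝ^N belongs to π↑(Ξ) if and only if for every n ≥ 1, all vectors x_1, …, x_n ∈ ℝ^N not all zero, and every z ∈ ℝ^N, one has h_S(z) ≤ (Σ_{k=1}^n h_S(x_k)) · sup_{ξ∈Ξ} [ h_{S_ξ}(z) / Σ_{k=1}^n h_{S_ξ}(x_k) ] (the supremum on the right is finite by nondegeneracy, and the denominators are positive since nondegenerate families of nonzero symmetric gauges have h_{S_ξ}(x) > 0 for x ≠ 0). -/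

import Mathlib

open Pointwise

/-- The support function `h_K(x) = sup{⟨x, y⟩ : y ∈ K}` of `K ⊆ ℝ^N`. -/
noncomputable def suppFn {N : ℕ} (K : Set (EuclideanSpace ℝ (Fin N)))
    (x : EuclideanSpace ℝ (Fin N)) : ℝ :=
  sSup ((fun y => (inner ℝ x y : ℝ)) '' K)

/-- A gauge in `ℝ^N`: a compact convex set containing the origin. -/
def IsGauge {N : ℕ} (K : Set (EuclideanSpace ℝ (Fin N))) : Prop :=
  IsCompact K ∧ Convex ℝ K ∧ (0 : EuclideanSpace ℝ (Fin N)) ∈ K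

/-- A family of gauges is nondegenerate if `sup_ξ ‖A‖_{S_ξ} < +∞` for every
linear operator `A` on `ℝ^N`, i.e. there is `C` such that for each `ξ` and each
`x ∈ S ξ` the gauge value `‖A x‖_{S ξ} = inf{β > 0 : A x ∈ β • S ξ}` is
attained below `C`. -/
def Nondegenerate {N : ℕ} {Ξ : Type*}
    (S : Ξ → Set (EuclideanSpace ℝ (Fin N))) : Prop :=
  ∀ A : EuclideanSpace ℝ (Fin N) →ₗ[ℝ] EuclideanSpace ℝ (Fin N),
    ∃ C : ℝ, ∀ ξ, ∀ x ∈ S ξ, ∃ β : ℝ, 0 < β ∧ β ≤ C ∧ A x ∈ β • S ξ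

/-- Closedness of a collection of (nonempty compact) subsets of `ℝ^N` in the
topology of the Hausdorff metric. -/
def IsHausdorffClosed {N : ℕ} (C : Set (Set (EuclideanSpace ℝ (Fin N)))) : Prop :=
  IsClosed {K : TopologicalSpace.NonemptyCompacts (EuclideanSpace ℝ (Fin N)) |
    (K : Set (EuclideanSpace ℝ (Fin N))) ∈ C}

/-- `π↑(F)`: the least Hausdorff-closed cone of gauges containing `F` that is
closed under the join `K ∨ L = conv (K ∪ L)`. -/
def piUp {N : ℕ} (F : Set (Set (EuclideanSpace ℝ (Fin N)))) :
    Set (Set (EuclideanSpace ℝ (Fin N))) :=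
  ⋂₀ {C | (∀ K ∈ C, IsGauge K) ∧ IsHausdorffClosed C ∧ F ⊆ C ∧
      (∀ K ∈ C, ∀ L ∈ C, K + L ∈ C) ∧
      (∀ K ∈ C, ∀ α : ℝ, 0 ≤ α → α • K ∈ C) ∧
      (∀ K ∈ C, ∀ L ∈ C, convexHull ℝ (K ∪ L) ∈ C)}

/-- `π↓(F)`: the least Hausdorff-closed cone of gauges containing `F` that is
closed under the meet `K ∧ L = K ∩ L`. -/
def piDown {N : ℕ} (F : Set (Set (EuclideanSpace ℝ (Fin N)))) :
    Set (Set (EuclideanSpace ℝ (Fin N))) :=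
  ⋂₀ {C | (∀ K ∈ C, IsGauge K) ∧ IsHausdorffClosed C ∧ F ⊆ C ∧
      (∀ K ∈ C, ∀ L ∈ C, K + L ∈ C) ∧
      (∀ K ∈ C, ∀ α : ℝ, 0 ≤ α → α • K ∈ C) ∧
      (∀ K ∈ C, ∀ L ∈ C, K ∩ L ∈ C)}

/-- `π(F)`: the least Hausdorff-closed cone of gauges containing `F` that is
closed under both the join and the meet. -/
def piBoth {N : ℕ} (F : Set (Set (EuclideanSpace ℝ (Fin N)))) :
    Set (Set (EuclideanSpace ℝ (Fin N))) :=
  ⋂₀ {C | (∀ K ∈ C, IsGauge K) ∧ IsHausdorffClosed C ∧ F ⊆ C ∧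
      (∀ K ∈ C, ∀ L ∈ C, K + L ∈ C) ∧
      (∀ K ∈ C, ∀ α : ℝ, 0 ≤ α → α • K ∈ C) ∧
      (∀ K ∈ C, ∀ L ∈ C, convexHull ℝ (K ∪ L) ∈ C) ∧
      (∀ K ∈ C, ∀ L ∈ C, K ∩ L ∈ C)}

/-!
Support functions turn the cone operations into pointwise ones: `h_{K+L} = h_K + h_L`,
`h_{aK} = a h_K`, `h_{K ∨ L} = max h_K h_L`, and Hausdorff convergence is uniform convergence of
support functions on the unit sphere. Each of these preserves the bound, so it holds on `π↑(Ξ)`.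

Conversely, let `T` satisfy the bound and let `C` be a closed join-cone containing every `S ξ`.
Given directions `w i` and `z`, suppose no `K ∈ C` has `h_K(w i) < h_T(w i) + ε` for all `i` and
`h_K(z) > h_T(z) - ε`. Separating the convex cone spanned by the points `((h_K(w i))_i, h_K(z))`,
`K ∈ C`, from a box around `((h_T(w i))_i, h_T(z))` yields weights `λ i ≥ 0` and `ν > 0` with
`ν h_{S ξ}(z) ≤ Σ λ i h_{S ξ}(w i)` for every `ξ` but `Σ λ i h_T(w i) < ν h_T(z)`; then the bound
fails for `x i = λ i w i`. Taking for `w` a finite net of the sphere, the join of the members of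
`C` obtained for each `z` in the net is Hausdorff-close to `T`, and `C` is closed.

Nondegeneracy, applied to rank-one operators, gives `h_{S ξ}(y) ≤ c h_{S ξ}(z)` uniformly in `ξ`
for `z ≠ 0`; this makes the supremum finite and the denominators positive.
-/

section NonemptyCompacts

open Filter Topology Metric

lemma TopologicalSpace.NonemptyCompacts.mem_of_tendsto {E : Type*} [MetricSpace E]
    {K : ℕ → NonemptyCompacts E} {L : NonemptyCompacts E} (hK : Tendsto K atTop (𝓝 L))
    {p : ℕ → E} {q : E} (hp : Tendsto p atTop (𝓝 q)) (hpK : ∀ n, p n ∈ K n) : q ∈ L := by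
  have h := (lipschitz_infDist.continuous.tendsto (q, L)).comp (hp.prodMk_nhds hK)
  rw [← SetLike.mem_coe, L.isCompact.isClosed.mem_iff_infDist_zero L.nonempty]
  refine tendsto_nhds_unique h ?_
  simp [Function.comp_def, infDist_zero_of_mem (hpK _)]

lemma TopologicalSpace.NonemptyCompacts.exists_tendsto_of_mem {E : Type*} [MetricSpace E]
    {K : ℕ → NonemptyCompacts E} {L : NonemptyCompacts E} (hK : Tendsto K atTop (𝓝 L))
    {q : E} (hq : q ∈ L) : ∃ p : ℕ → E, Tendsto p atTop (𝓝 q) ∧ ∀ n, p n ∈ K n := by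
  choose p hpK hp using fun n => (K n).isCompact.exists_infDist_eq_dist (K n).nonempty q
  refine ⟨p, ?_, hpK⟩
  have h := ((lipschitz_infDist_set q).continuous.tendsto L).comp hK
  rw [Function.comp_def, infDist_zero_of_mem hq] at h
  rw [tendsto_iff_dist_tendsto_zero]
  simpa only [dist_comm (p _), ← hp] using h

end NonemptyCompacts

lemma isCompact_convexJoin {E : Type*} [AddCommGroup E] [Module ℝ E] [TopologicalSpace E]
    [IsTopologicalAddGroup E] [ContinuousSMul ℝ E] {s t : Set E} (hs : IsCompact s)
    (ht : IsCompact t) :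
    IsCompact (convexJoin ℝ s t) := by
  have : convexJoin ℝ s t = (fun p : ℝ × E × E => (1 - p.1) • p.2.1 + p.1 • p.2.2) ''
      (Set.Icc 0 1 ×ˢ s ×ˢ t) := by
    ext z
    simp only [mem_convexJoin, segment_eq_image, Set.mem_image, Set.mem_prod, Prod.exists]
    constructor
    · rintro ⟨a, ha, b, hb, θ, hθ, rfl⟩
      exact ⟨θ, a, b, ⟨hθ, ha, hb⟩, rfl⟩
    · rintro ⟨θ, a, b, ⟨hθ, ha, hb⟩, rfl⟩
      exact ⟨a, ha, b, hb, θ, hθ, rfl⟩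
  rw [this]
  exact (isCompact_Icc.prod (hs.prod ht)).image (by fun_prop)

lemma nonneg_of_forall_le_mul {a u : ℝ} (h : ∀ t : ℝ, 0 ≤ t → u ≤ t * a) : 0 ≤ a := by
  by_contra! ha
  have := h ((|u| + 1) / -a) (div_nonneg (by positivity) (by linarith))
  rw [div_mul_eq_mul_div, div_neg, mul_div_assoc, div_self ha.ne, mul_one] at this
  linarith [neg_abs_le u]

lemma exists_dual_nonneg_of_disjoint {X : Type*} [AddCommGroup X] [Module ℝ X]
    [TopologicalSpace X] [IsTopologicalAddGroup X] [ContinuousSMul ℝ X] {E O : Set X}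
    (hE : Convex ℝ E) (hE0 : 0 ∈ E) (hEsmul : ∀ q ∈ E, ∀ t : ℝ, 0 ≤ t → t • q ∈ E)
    (hO : IsOpen O) (hOc : Convex ℝ O) (hdisj : Disjoint O E) {p : X} (hp : p ∈ O) :
    ∃ f : StrongDual ℝ X, (∀ q ∈ E, 0 ≤ f q) ∧ f p < 0 := by
  obtain ⟨f, u, hfO, hfE⟩ := geometric_hahn_banach_open hOc hO hE hdisj
  have hu : u ≤ 0 := by simpa using hfE 0 hE0
  refine ⟨f, fun q hq => nonneg_of_forall_le_mul (u := u) fun t ht => ?_,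
    (hfO p hp).trans_le hu⟩
  simpa using hfE _ (hEsmul q hq t ht)

section Separation

variable {ι : Type*} [Fintype ι]

lemma LinearMap.apply_prod_eq_sum [DecidableEq ι] (f : (ι → ℝ) × ℝ →ₗ[ℝ] ℝ) (v : ι → ℝ)
    (s : ℝ) : f (v, s) = ∑ i, v i * f (Pi.single i 1, 0) + s * f (0, 1) := by
  have : (v, s) = ∑ i, v i • ((Pi.single i 1 : ι → ℝ), (0 : ℝ)) + s • (0, 1) := by
    ext <;> simp [Prod.fst_sum, Prod.snd_sum, Finset.sum_apply, Pi.single_apply]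
  rw [this, map_add, map_sum, map_smul]
  simp only [map_smul, smul_eq_mul]

open Set in
lemma exists_dual_certificate {A : Set ((ι → ℝ) × ℝ)} (hA0 : 0 ∈ A)
    (hadd : ∀ a ∈ A, ∀ b ∈ A, a + b ∈ A) (hsmul : ∀ a ∈ A, ∀ t : ℝ, 0 ≤ t → t • a ∈ A)
    {c : ι → ℝ} (hc : 0 ≤ c) {r ε : ℝ} (hε : 0 < ε)
    (h : ∀ a ∈ A, (∀ i, a.1 i < c i + ε) → a.2 ≤ r - ε) :
    ∃ l : ι → ℝ, 0 ≤ l ∧ ∃ ν > 0, (∀ a ∈ A, ν * a.2 ≤ ∑ i, l i * a.1 i) ∧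
      ∑ i, l i * c i < ν * r := by
  classical
  set E := {p : (ι → ℝ) × ℝ | ∃ a ∈ A, a.1 ≤ p.1 ∧ p.2 ≤ a.2}
  have hE0 : ∀ p : (ι → ℝ) × ℝ, 0 ≤ p.1 → p.2 ≤ 0 → p ∈ E := fun p h1 h2 => ⟨0, hA0, h1, h2⟩
  have hEsmul : ∀ p ∈ E, ∀ t : ℝ, 0 ≤ t → t • p ∈ E := by
    rintro p ⟨a, ha, h1, h2⟩ t ht
    exact ⟨t • a, hsmul a ha t ht, smul_le_smul_of_nonneg_left h1 ht,
      smul_le_smul_of_nonneg_left h2 ht⟩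
  have hEconv : Convex ℝ E := by
    rintro p ⟨a, ha, ha1, ha2⟩ q ⟨b, hb, hb1, hb2⟩ s t hs ht -
    exact ⟨s • a + t • b, hadd _ (hsmul a ha s hs) _ (hsmul b hb t ht),
      add_le_add (smul_le_smul_of_nonneg_left ha1 hs) (smul_le_smul_of_nonneg_left hb1 ht),
      add_le_add (smul_le_smul_of_nonneg_left ha2 hs) (smul_le_smul_of_nonneg_left hb2 ht)⟩
  have hdisj : Disjoint ((univ.pi fun i => Iio (c i + ε)) ×ˢ Ioi (r - ε)) E := by
    refine disjoint_left.2 fun p ⟨hp1, hp2⟩ ⟨a, ha, ha1, ha2⟩ => ?_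
    have := h a ha fun i => (ha1 i).trans_lt (hp1 i (mem_univ i))
    linarith [ha2.trans_lt' hp2]
  obtain ⟨f, hf, hfc⟩ := exists_dual_nonneg_of_disjoint hEconv (hE0 0 le_rfl le_rfl) hEsmul
    ((isOpen_set_pi finite_univ fun i _ => isOpen_Iio).prod isOpen_Ioi)
    ((convex_pi fun i _ => convex_Iio _).prod (convex_Ioi _)) hdisj
    (p := (c, r)) ⟨fun i _ => by simp [hε], by simp [hε]⟩
  set l : ι → ℝ := fun i => f (Pi.single i 1, 0)
  set ν := f (0, -1)
  have hdecomp (v : ι → ℝ) (s : ℝ) : f (v, s) = ∑ i, l i * v i - ν * s := by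
    have h01 : f (0, -1) = -f (0, 1) := by rw [← map_neg]; simp
    have := LinearMap.apply_prod_eq_sum f.toLinearMap v s
    simp only [ContinuousLinearMap.coe_coe] at this
    simp only [this, l, ν, h01, mul_comm]
    ring
  have hl : 0 ≤ l := fun i => hf _ (hE0 _ (Pi.single_nonneg.2 zero_le_one) le_rfl)
  have hν : 0 ≤ ν := hf _ (hE0 _ le_rfl (by norm_num))
  have hlc : ∑ i, l i * c i < ν * r := by linarith [hdecomp c r]
  refine ⟨l, hl, ν, hν.lt_of_ne fun h0 => ?_, fun a ha => ?_, hlc⟩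
  · rw [← h0, zero_mul] at hlc
    exact hlc.not_ge (Finset.sum_nonneg fun i _ => mul_nonneg (hl i) (hc i))
  · have := hf a ⟨a, ha, le_rfl, le_rfl⟩
    rw [← Prod.mk.eta (p := a), hdecomp] at this
    linarith

end Separation

section Gauge

variable {N : ℕ} {Ξ : Type*} {S : Ξ → Set (EuclideanSpace ℝ (Fin N))}

local notation "V" => EuclideanSpace ℝ (Fin N)

lemma IsGauge.nonempty {K : Set V} (hK : IsGauge K) : K.Nonempty := ⟨0, hK.2.2⟩

lemma bddAbove_inner_image {K : Set V} (hK : IsCompact K) (x : V) :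
    BddAbove ((fun y => (inner ℝ x y : ℝ)) '' K) :=
  (hK.image (continuous_const.inner continuous_id)).bddAbove

lemma inner_le_suppFn {K : Set V} (hK : IsCompact K) {x y : V} (hy : y ∈ K) :
    (inner ℝ x y : ℝ) ≤ suppFn K x :=
  le_csSup (bddAbove_inner_image hK x) ⟨y, hy, rfl⟩

lemma suppFn_le {K : Set V} (hK : K.Nonempty) {x : V} {c : ℝ}
    (h : ∀ y ∈ K, (inner ℝ x y : ℝ) ≤ c) : suppFn K x ≤ c :=
  csSup_le (hK.image _) (by rintro _ ⟨y, hy, rfl⟩; exact h y hy)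

lemma suppFn_nonneg {K : Set V} (hK : IsGauge K) (x : V) : 0 ≤ suppFn K x := by
  simpa using inner_le_suppFn hK.1 (x := x) hK.2.2

lemma suppFn_zero {K : Set V} (hK : IsCompact K) (hne : K.Nonempty) : suppFn K 0 = 0 := by
  obtain ⟨y, hy⟩ := hne
  exact le_antisymm (suppFn_le ⟨y, hy⟩ fun _ _ => by simp)
    (by simpa using inner_le_suppFn hK (x := 0) hy)

lemma suppFn_smul_set {K : Set V} {a : ℝ} (ha : 0 ≤ a) (x : V) :
    suppFn (a • K) x = a * suppFn K x := by
  rw [suppFn, suppFn, ← smul_eq_mul, ← Real.sSup_smul_of_nonneg ha, ← Set.image_smul,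
    Set.image_image, ← Set.image_smul, Set.image_image]
  simp_rw [real_inner_smul_right, smul_eq_mul]

lemma suppFn_smul {K : Set V} {a : ℝ} (ha : 0 ≤ a) (x : V) :
    suppFn K (a • x) = a * suppFn K x := by
  rw [suppFn, suppFn, ← smul_eq_mul, ← Real.sSup_smul_of_nonneg ha, ← Set.image_smul,
    Set.image_image]
  simp_rw [real_inner_smul_left, smul_eq_mul]

lemma suppFn_add_set {K L : Set V} (hK : IsCompact K) (hKne : K.Nonempty)
    (hL : IsCompact L) (hLne : L.Nonempty) (x : V) :
    suppFn (K + L) x = suppFn K x + suppFn L x := by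
  rw [suppFn, show (fun y => (inner ℝ x y : ℝ)) = innerSL ℝ x from rfl, Set.image_add]
  exact csSup_add (hKne.image _) (bddAbove_inner_image hK x) (hLne.image _)
    (bddAbove_inner_image hL x)

lemma suppFn_add_le {K : Set V} (hK : IsCompact K) (hne : K.Nonempty) (x y : V) :
    suppFn K (x + y) ≤ suppFn K x + suppFn K y :=
  suppFn_le hne fun a ha => by
    rw [inner_add_left]; exact add_le_add (inner_le_suppFn hK ha) (inner_le_suppFn hK ha)

lemma suppFn_convexHull_union {K L : Set V} (hK : IsCompact K) (hKne : K.Nonempty)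
    (hL : IsCompact L) (hLne : L.Nonempty) (x : V) :
    suppFn (convexHull ℝ (K ∪ L)) x = max (suppFn K x) (suppFn L x) := by
  set m := max (suppFn K x) (suppFn L x)
  have hsub : convexHull ℝ (K ∪ L) ⊆ {y | (inner ℝ x y : ℝ) ≤ m} := by
    refine convexHull_min ?_ (convex_halfSpace_le (innerₛₗ ℝ x).isLinear m)
    rintro y (hy | hy)
    · exact (inner_le_suppFn hK hy).trans (le_max_left _ _)
    · exact (inner_le_suppFn hL hy).trans (le_max_right _ _)
  have hbdd : BddAbove ((fun y => (inner ℝ x y : ℝ)) '' convexHull ℝ (K ∪ L)) :=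
    ⟨m, by rintro _ ⟨y, hy, rfl⟩; exact hsub hy⟩
  have hle : ∀ M ⊆ K ∪ L, M.Nonempty → suppFn M x ≤ suppFn (convexHull ℝ (K ∪ L)) x :=
    fun M hM hne => suppFn_le hne fun y hy =>
      le_csSup hbdd ⟨y, subset_convexHull ℝ _ (hM hy), rfl⟩
  refine le_antisymm (suppFn_le ((hKne.mono Set.subset_union_left).convexHull) hsub) ?_
  exact max_le (hle K Set.subset_union_left hKne) (hle L Set.subset_union_right hLne)

lemma suppFn_le_mul_norm {K : Set V} (hK : K.Nonempty) {R : ℝ} (hR : ∀ y ∈ K, ‖y‖ ≤ R)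
    (x : V) : suppFn K x ≤ R * ‖x‖ :=
  suppFn_le hK fun y hy => (real_inner_le_norm x y).trans <| by
    rw [mul_comm]; exact mul_le_mul_of_nonneg_right (hR y hy) (norm_nonneg x)

lemma suppFn_eq_norm_mul {K : Set V} (hK : IsCompact K) (hne : K.Nonempty) (x : V) :
    suppFn K x = ‖x‖ * suppFn K (‖x‖⁻¹ • x) := by
  rcases eq_or_ne x 0 with rfl | hx
  · simp [suppFn_zero hK hne]
  · rw [← suppFn_smul (norm_nonneg x), smul_smul, mul_inv_cancel₀ (norm_ne_zero_iff.2 hx),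
      one_smul]

lemma suppFn_le_add_mul_norm_of_sphere {K L : Set V} (hK : IsCompact K) (hKne : K.Nonempty)
    (hL : IsCompact L) (hLne : L.Nonempty) {c : ℝ}
    (h : ∀ u : V, ‖u‖ = 1 → suppFn K u ≤ suppFn L u + c) (x : V) :
    suppFn K x ≤ suppFn L x + c * ‖x‖ := by
  rcases eq_or_ne x 0 with rfl | hx
  · simp [suppFn_zero hK hKne, suppFn_zero hL hLne]
  · rw [suppFn_eq_norm_mul hK hKne, suppFn_eq_norm_mul hL hLne]
    have hu : ‖(‖x‖⁻¹ • x : V)‖ = 1 := norm_smul_inv_norm hx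
    have := mul_le_mul_of_nonneg_left (h _ hu) (norm_nonneg x)
    linarith

lemma subset_zero_of_suppFn_nonpos {K : Set V} (hK : IsCompact K)
    (h : ∀ x, suppFn K x ≤ 0) : K ⊆ {0} := fun p hp => by
  have := (inner_le_suppFn hK hp (x := p)).trans (h p)
  rw [real_inner_self_eq_norm_sq] at this
  simpa using pow_eq_zero_iff (n := 2) two_ne_zero |>.1 (le_antisymm this (sq_nonneg _))

open Metric in
lemma suppFn_le_add_hausdorffDist_mul {K L : Set V} (hK : IsCompact K) (hKne : K.Nonempty)
    (hL : IsCompact L) (hLne : L.Nonempty) (x : V) :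
    suppFn K x ≤ suppFn L x + hausdorffDist K L * ‖x‖ := by
  refine suppFn_le hKne fun p hp => ?_
  obtain ⟨q, hq, hpq⟩ := hL.exists_infDist_eq_dist hLne p
  have hdist : ‖p - q‖ ≤ hausdorffDist K L := by
    rw [← dist_eq_norm, ← hpq]
    exact infDist_le_hausdorffDist_of_mem hp
      (hausdorffEDist_ne_top_of_nonempty_of_bounded hKne hLne hK.isBounded hL.isBounded)
  calc (inner ℝ x p : ℝ) = inner ℝ x q + inner ℝ x (p - q) := by rw [inner_sub_right]; ring
    _ ≤ suppFn L x + ‖x‖ * ‖p - q‖ :=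
        add_le_add (inner_le_suppFn hL hq) (real_inner_le_norm x _)
    _ ≤ suppFn L x + hausdorffDist K L * ‖x‖ := by
        rw [mul_comm]; gcongr

open TopologicalSpace in
lemma lipschitzWith_suppFn_apply (x : V) :
    LipschitzWith ‖x‖₊ fun K : NonemptyCompacts V => suppFn (K : Set V) x :=
  LipschitzWith.of_le_add_mul _ fun K L => by
    rw [Metric.NonemptyCompacts.dist_eq, coe_nnnorm, mul_comm]
    exact suppFn_le_add_hausdorffDist_mul K.isCompact K.nonempty L.isCompact L.nonempty x

lemma exists_dist_le_of_suppFn_le {K L : Set V} (hK : IsCompact K) (hL : IsGauge L) {ε : ℝ}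
    (hε : 0 ≤ ε) (h : ∀ x, suppFn K x ≤ suppFn L x + ε * ‖x‖) :
    ∀ p ∈ K, ∃ q ∈ L, dist p q ≤ ε := by
  intro p hp
  -- test the bound in the direction `p - q`, where `q` is the nearest point of `L` to `p`
  obtain ⟨q, hq, hmin⟩ :=
    exists_norm_eq_iInf_of_complete_convex hL.nonempty hL.1.isComplete hL.2.1 p
  refine ⟨q, hq, ?_⟩
  have hproj := (norm_eq_iInf_iff_real_inner_le_zero hL.2.1 hq).1 hmin
  have hLq : suppFn L (p - q) ≤ inner ℝ (p - q) q :=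
    suppFn_le hL.nonempty fun w hw => by
      have := hproj w hw
      rw [inner_sub_right] at this
      linarith
  have hsq : ‖p - q‖ ^ 2 ≤ ε * ‖p - q‖ := by
    have := (inner_le_suppFn hK hp (x := p - q)).trans (h (p - q))
    rw [← real_inner_self_eq_norm_sq, inner_sub_right]
    linarith
  rw [dist_eq_norm]
  nlinarith [norm_nonneg (p - q)]

open Metric in
lemma hausdorffDist_le_of_suppFn_le {K L : Set V} (hK : IsGauge K) (hL : IsGauge L) {ε : ℝ}
    (hε : 0 ≤ ε) (hKL : ∀ x, suppFn K x ≤ suppFn L x + ε * ‖x‖)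
    (hLK : ∀ x, suppFn L x ≤ suppFn K x + ε * ‖x‖) :
    hausdorffDist K L ≤ ε :=
  hausdorffDist_le_of_mem_dist hε (exists_dist_le_of_suppFn_le hK.1 hL hε hKL)
    (exists_dist_le_of_suppFn_le hL.1 hK hε hLK)

open Filter TopologicalSpace in
lemma isClosed_setOf_isGauge : IsClosed {K : NonemptyCompacts V | IsGauge (K : Set V)} := by
  refine IsSeqClosed.isClosed fun K L hK hKL => ⟨L.isCompact, ?_, ?_⟩
  · intro x hx y hy a b ha hb hab
    obtain ⟨p, hp, hpK⟩ := NonemptyCompacts.exists_tendsto_of_mem hKL hx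
    obtain ⟨q, hq, hqK⟩ := NonemptyCompacts.exists_tendsto_of_mem hKL hy
    exact NonemptyCompacts.mem_of_tendsto hKL ((hp.const_smul a).add (hq.const_smul b))
      fun n => (hK n).2.1 (hpK n) (hqK n) ha hb hab
  · exact NonemptyCompacts.mem_of_tendsto hKL tendsto_const_nhds fun n => (hK n).2.2

lemma IsGauge.add {K L : Set V} (hK : IsGauge K) (hL : IsGauge L) : IsGauge (K + L) :=
  ⟨hK.1.add hL.1, hK.2.1.add hL.2.1, by simpa using Set.add_mem_add hK.2.2 hL.2.2⟩

lemma IsGauge.smul {K : Set V} (hK : IsGauge K) (a : ℝ) : IsGauge (a • K) :=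
  ⟨hK.1.smul a, hK.2.1.smul a, by simpa using Set.smul_mem_smul_set (a := a) hK.2.2⟩

lemma IsGauge.convexHull_union {K L : Set V} (hK : IsGauge K) (hL : IsGauge L) :
    IsGauge (convexHull ℝ (K ∪ L)) := by
  refine ⟨?_, convex_convexHull ℝ _, subset_convexHull ℝ _ (Or.inl hK.2.2)⟩
  rw [hK.2.1.convexHull_union hL.2.1 hK.nonempty hL.nonempty]
  exact isCompact_convexJoin hK.1 hL.1

lemma Nondegenerate.exists_suppFn_le_mul (hg : ∀ ξ, IsGauge (S ξ)) (hnd : Nondegenerate S)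
    {z : V} (hz : z ≠ 0) (y : V) :
    ∃ C, 0 ≤ C ∧ ∀ ξ, suppFn (S ξ) y ≤ C * suppFn (S ξ) z := by
  obtain ⟨C, hC⟩ := hnd ((innerSL ℝ y).toLinearMap.smulRight ((‖z‖ ^ 2)⁻¹ • z))
  refine ⟨max C 0, le_max_right _ _, fun ξ => suppFn_le (hg ξ).nonempty fun s hs => ?_⟩
  obtain ⟨β, hβ, hβC, u, hu, hAu⟩ := hC ξ s hs
  have hz2 : ‖z‖ ^ 2 ≠ 0 := by positivity
  -- the rank-one map `s ↦ ⟪y, s⟫ ‖z‖⁻² z` turns `⟪y, s⟫` into the `z`-component of `β u`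
  have key : (inner ℝ y s : ℝ) = β * inner ℝ z u := by
    have := congrArg (fun v => (inner ℝ z v : ℝ)) hAu
    simp only [LinearMap.smulRight_apply, ContinuousLinearMap.coe_coe, innerSL_apply_apply,
      real_inner_smul_right, real_inner_self_eq_norm_sq] at this
    rw [this, inv_mul_cancel₀ hz2, mul_one]
  calc (inner ℝ y s : ℝ) = β * inner ℝ z u := key
    _ ≤ β * suppFn (S ξ) z := by gcongr; exact inner_le_suppFn (hg ξ).1 hu
    _ ≤ max C 0 * suppFn (S ξ) z := by
        gcongr
        · exact suppFn_nonneg (hg ξ) z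
        · exact hβC.trans (le_max_left _ _)

lemma Nondegenerate.suppFn_pos (hg : ∀ ξ, IsGauge (S ξ)) (hnz : ∀ ξ, S ξ ≠ {0})
    (hnd : Nondegenerate S) (ξ : Ξ) {z : V} (hz : z ≠ 0) : 0 < suppFn (S ξ) z := by
  by_contra! h
  refine hnz ξ (Set.Subset.antisymm (subset_zero_of_suppFn_nonpos (hg ξ).1 fun y => ?_)
    (Set.singleton_subset_iff.2 (hg ξ).2.2))
  obtain ⟨C, hC, hle⟩ := hnd.exists_suppFn_le_mul hg hz y
  exact (hle ξ).trans (mul_nonpos_of_nonneg_of_nonpos hC h)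

/-- In Lean `⨆` of a family that is not bounded above is `0`; boundedness is `le_ratioSup`. -/
noncomputable def ratioSup (S : Ξ → Set V) {ι : Type*} [Fintype ι] (x : ι → V) (z : V) : ℝ :=
  ⨆ ξ, suppFn (S ξ) z / ∑ k, suppFn (S ξ) (x k)

def SupBound (S : Ξ → Set V) (T : Set V) : Prop :=
  ∀ (n : ℕ) (x : Fin (n + 1) → V), (∃ k, x k ≠ 0) →
    ∀ z, suppFn T z ≤ (∑ k, suppFn T (x k)) * ratioSup S x z

section Finite

variable {ι : Type*} [Fintype ι]

lemma sum_suppFn_pos (hg : ∀ ξ, IsGauge (S ξ)) (hnz : ∀ ξ, S ξ ≠ {0}) (hnd : Nondegenerate S)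
    {x : ι → V} (hx : ∃ k, x k ≠ 0) (ξ : Ξ) : 0 < ∑ k, suppFn (S ξ) (x k) := by
  obtain ⟨k, hk⟩ := hx
  exact Finset.sum_pos' (fun _ _ => suppFn_nonneg (hg ξ) _)
    ⟨k, Finset.mem_univ k, hnd.suppFn_pos hg hnz ξ hk⟩

lemma ratioSup_nonneg (hg : ∀ ξ, IsGauge (S ξ)) (x : ι → V) (z : V) : 0 ≤ ratioSup S x z :=
  Real.iSup_nonneg fun ξ => div_nonneg (suppFn_nonneg (hg ξ) z)
    (Finset.sum_nonneg fun _ _ => suppFn_nonneg (hg ξ) _)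

lemma le_ratioSup (hg : ∀ ξ, IsGauge (S ξ)) (hnz : ∀ ξ, S ξ ≠ {0}) (hnd : Nondegenerate S)
    {x : ι → V} (hx : ∃ k, x k ≠ 0) (z : V) (ξ : Ξ) :
    suppFn (S ξ) z / ∑ k, suppFn (S ξ) (x k) ≤ ratioSup S x z := by
  obtain ⟨k, hk⟩ := hx
  obtain ⟨C, hC0, hC⟩ := hnd.exists_suppFn_le_mul hg hk z
  refine le_ciSup (f := fun ξ => suppFn (S ξ) z / ∑ k, suppFn (S ξ) (x k)) ⟨C, ?_⟩ ξ
  rintro _ ⟨η, rfl⟩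
  rw [div_le_iff₀ (sum_suppFn_pos hg hnz hnd ⟨k, hk⟩ η)]
  calc suppFn (S η) z ≤ C * suppFn (S η) (x k) := hC η
    _ ≤ C * ∑ k, suppFn (S η) (x k) := by
        gcongr
        exact Finset.single_le_sum (fun k _ => suppFn_nonneg (hg η) _) (Finset.mem_univ k)

lemma SupBound.le_of_fintype {T : Set V} (hT : SupBound S T) {x : ι → V} (hx : ∃ k, x k ≠ 0)
    (z : V) : suppFn T z ≤ (∑ k, suppFn T (x k)) * ratioSup S x z := by
  obtain ⟨k, hk⟩ := hx
  have hcard : Fintype.card ι = Fintype.card ι - 1 + 1 :=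
    (Nat.sub_add_cancel (Fintype.card_pos_iff.2 ⟨k⟩)).symm
  set e : Fin (Fintype.card ι - 1 + 1) ≃ ι := (Fintype.equivFinOfCardEq hcard).symm
  have hsum (K : Set V) : ∑ k, suppFn K ((x ∘ e) k) = ∑ k, suppFn K (x k) :=
    e.sum_comp fun k => suppFn K (x k)
  simpa only [ratioSup, hsum] using hT _ (x ∘ e) ⟨e.symm k, by simpa using hk⟩ z

end Finite

lemma supBound_self (hg : ∀ ξ, IsGauge (S ξ)) (hnz : ∀ ξ, S ξ ≠ {0}) (hnd : Nondegenerate S)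
    (ξ : Ξ) : SupBound S (S ξ) := fun _ x hx z => by
  have := le_ratioSup hg hnz hnd hx z ξ
  rwa [div_le_iff₀' (sum_suppFn_pos hg hnz hnd hx ξ)] at this

lemma SupBound.add {K L : Set V} (hK : IsGauge K) (hL : IsGauge L) (hKS : SupBound S K)
    (hLS : SupBound S L) : SupBound S (K + L) := fun n x hx z => by
  simp only [suppFn_add_set hK.1 hK.nonempty hL.1 hL.nonempty, Finset.sum_add_distrib, add_mul]
  exact add_le_add (hKS n x hx z) (hLS n x hx z)

lemma SupBound.smul {K : Set V} (hKS : SupBound S K) {a : ℝ} (ha : 0 ≤ a) :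
    SupBound S (a • K) := fun n x hx z => by
  simp only [suppFn_smul_set ha, ← Finset.mul_sum, mul_assoc]
  exact mul_le_mul_of_nonneg_left (hKS n x hx z) ha

lemma SupBound.convexHull_union (hg : ∀ ξ, IsGauge (S ξ)) {K L : Set V} (hK : IsGauge K)
    (hL : IsGauge L) (hKS : SupBound S K) (hLS : SupBound S L) :
    SupBound S (convexHull ℝ (K ∪ L)) := fun n x hx z => by
  simp only [suppFn_convexHull_union hK.1 hK.nonempty hL.1 hL.nonempty]
  have hR := ratioSup_nonneg hg x z
  refine max_le ((hKS n x hx z).trans ?_) ((hLS n x hx z).trans ?_) <;>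
    exact mul_le_mul_of_nonneg_right (Finset.sum_le_sum fun _ _ => by simp) hR

open TopologicalSpace in
lemma isHausdorffClosed_setOf_supBound :
    IsHausdorffClosed {K : Set V | IsGauge K ∧ SupBound S K} := by
  have : {K : NonemptyCompacts V | IsGauge (K : Set V) ∧ SupBound S K} =
      {K : NonemptyCompacts V | IsGauge (K : Set V)} ∩
        ⋂ (n : ℕ) (x : Fin (n + 1) → V) (_ : ∃ k, x k ≠ 0) (z : V), {K : NonemptyCompacts V |
          suppFn (K : Set V) z ≤ (∑ k, suppFn (K : Set V) (x k)) * ratioSup S x z} := by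
    ext K; simp [SupBound]
  refine (this ▸ isClosed_setOf_isGauge.inter (isClosed_iInter fun n => isClosed_iInter
    fun x => isClosed_iInter fun _ => isClosed_iInter fun z => isClosed_le ?_ ?_) :)
  · exact (lipschitzWith_suppFn_apply z).continuous
  · exact (continuous_finsetSum _ fun k _ => (lipschitzWith_suppFn_apply (x k)).continuous).mul
      continuous_const

lemma supBound_of_mem_piUp (hg : ∀ ξ, IsGauge (S ξ)) (hnz : ∀ ξ, S ξ ≠ {0})
    (hnd : Nondegenerate S) {T : Set V} (hT : T ∈ piUp (Set.range S)) : SupBound S T := by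
  refine (hT {K | IsGauge K ∧ SupBound S K} ⟨fun K hK => hK.1,
    isHausdorffClosed_setOf_supBound, ?_, ?_, ?_, ?_⟩).2
  · rintro _ ⟨ξ, rfl⟩
    exact ⟨hg ξ, supBound_self hg hnz hnd ξ⟩
  · exact fun K hK L hL => ⟨hK.1.add hL.1, hK.2.add hK.1 hL.1 hL.2⟩
  · exact fun K hK a ha => ⟨hK.1.smul a, hK.2.smul ha⟩
  · exact fun K hK L hL => ⟨hK.1.convexHull_union hL.1, hK.2.convexHull_union hg hK.1 hL.1 hL.2⟩

lemma exists_mem_suppFn_approx [Nonempty Ξ] (hg : ∀ ξ, IsGauge (S ξ)) (hnz : ∀ ξ, S ξ ≠ {0})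
    (hnd : Nondegenerate S) {C : Set (Set V)} (hCg : ∀ K ∈ C, IsGauge K)
    (hCS : Set.range S ⊆ C) (hCadd : ∀ K ∈ C, ∀ L ∈ C, K + L ∈ C)
    (hCsmul : ∀ K ∈ C, ∀ a : ℝ, 0 ≤ a → a • K ∈ C) {T : Set V} (hT : IsGauge T)
    (hTS : SupBound S T) {ι : Type*} [Fintype ι] (w : ι → V) {z : V} (hz : z ≠ 0) {ε : ℝ}
    (hε : 0 < ε) :
    ∃ K ∈ C, (∀ i, suppFn K (w i) < suppFn T (w i) + ε) ∧ suppFn T z - ε < suppFn K z := by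
  by_contra! hcon
  obtain ⟨ξ₀⟩ := ‹Nonempty Ξ›
  set A := (fun K => ((fun i => suppFn K (w i)), suppFn K z)) '' C
  have hA0 : 0 ∈ A := ⟨0 • S ξ₀, hCsmul _ (hCS ⟨ξ₀, rfl⟩) 0 le_rfl, by
    ext <;> simp [suppFn_smul_set]⟩
  have hAadd : ∀ a ∈ A, ∀ b ∈ A, a + b ∈ A := by
    rintro _ ⟨K, hK, rfl⟩ _ ⟨L, hL, rfl⟩
    have hKg := hCg K hK; have hLg := hCg L hL
    exact ⟨K + L, hCadd K hK L hL, by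
      ext <;> simp [suppFn_add_set hKg.1 hKg.nonempty hLg.1 hLg.nonempty]⟩
  have hAsmul : ∀ a ∈ A, ∀ t : ℝ, 0 ≤ t → t • a ∈ A := by
    rintro _ ⟨K, hK, rfl⟩ t ht
    exact ⟨t • K, hCsmul K hK t ht, by ext <;> simp [suppFn_smul_set ht]⟩
  obtain ⟨l, hl, ν, hν, hA, hlc⟩ := exists_dual_certificate hA0 hAadd hAsmul
    (c := fun i => suppFn T (w i)) (fun i => suppFn_nonneg hT _) hε
    (by rintro _ ⟨K, hK, rfl⟩ h; exact hcon K hK h)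
  have hS (ξ : Ξ) : ν * suppFn (S ξ) z ≤ ∑ i, l i * suppFn (S ξ) (w i) :=
    hA _ ⟨S ξ, hCS ⟨ξ, rfl⟩, rfl⟩
  set x := fun i => l i • w i
  have hx_suppFn (K : Set V) (i : ι) : suppFn K (x i) = l i * suppFn K (w i) :=
    suppFn_smul (hl i) _
  have hx : ∃ k, x k ≠ 0 := by
    by_contra! h0
    have := hS ξ₀
    simp only [← hx_suppFn, h0, suppFn_zero (hg ξ₀).1 (hg ξ₀).nonempty,
      Finset.sum_const_zero] at this
    exact (mul_pos hν (hnd.suppFn_pos hg hnz ξ₀ hz)).not_ge this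
  have hratio : ratioSup S x z ≤ ν⁻¹ := ciSup_le fun ξ => by
    rw [div_le_iff₀ (sum_suppFn_pos hg hnz hnd hx ξ), le_inv_mul_iff₀ hν]
    simpa only [hx_suppFn] using hS ξ
  have hlc' : (∑ i, l i * suppFn T (w i)) * ν⁻¹ < suppFn T z := by
    rwa [mul_inv_lt_iff₀ hν, mul_comm]
  have := (hTS.le_of_fintype hx z).trans (mul_le_mul_of_nonneg_left hratio
    (Finset.sum_nonneg fun i _ => suppFn_nonneg hT _))
  simp only [hx_suppFn] at this
  linarith

lemma exists_join_mem {C : Set (Set V)} (hCg : ∀ K ∈ C, IsGauge K) (hC0 : {0} ∈ C)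
    (hCjoin : ∀ K ∈ C, ∀ L ∈ C, convexHull ℝ (K ∪ L) ∈ C) {ι : Type*} (s : Finset ι)
    {K : ι → Set V} (hK : ∀ i ∈ s, K i ∈ C) :
    ∃ J ∈ C, ∀ x, (∀ i ∈ s, suppFn (K i) x ≤ suppFn J x) ∧
      ∀ b, 0 ≤ b → (∀ i ∈ s, suppFn (K i) x ≤ b) → suppFn J x ≤ b := by
  classical
  induction s using Finset.induction_on with
  | empty => exact ⟨{0}, hC0, fun x => ⟨by simp, fun b hb _ => by simpa [suppFn] using hb⟩⟩
  | insert a s ha ih =>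
    obtain ⟨J, hJC, hJ⟩ := ih fun i hi => hK i (Finset.mem_insert_of_mem hi)
    have hKa := hK a (Finset.mem_insert_self a s)
    have hKag := hCg _ hKa; have hJg := hCg J hJC
    refine ⟨convexHull ℝ (K a ∪ J), hCjoin _ hKa _ hJC, fun x => ?_⟩
    simp only [suppFn_convexHull_union hKag.1 hKag.nonempty hJg.1 hJg.nonempty,
      Finset.forall_mem_insert, le_max_iff, max_le_iff]
    exact ⟨⟨Or.inl le_rfl, fun i hi => Or.inr ((hJ x).1 i hi)⟩,
      fun b hb ⟨hab, hsb⟩ => ⟨hab, (hJ x).2 b hb hsb⟩⟩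

lemma norm_le_of_net {K : Set V} (hK : IsCompact K) {t : Set V} {δ b : ℝ}
    (hnet : ∀ u : V, ‖u‖ = 1 → ∃ v ∈ t, ‖u - v‖ ≤ δ) (hb0 : 0 ≤ b)
    (hb : ∀ v ∈ t, suppFn K v ≤ b) {y : V} (hy : y ∈ K) : (1 - δ) * ‖y‖ ≤ b := by
  rcases eq_or_ne y 0 with rfl | hy0
  · simpa using hb0
  have hu : ‖(‖y‖⁻¹ • y : V)‖ = 1 := norm_smul_inv_norm hy0
  obtain ⟨v, hv, huv⟩ := hnet _ hu
  have hyy : (inner ℝ (‖y‖⁻¹ • y) y : ℝ) = ‖y‖ := by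
    rw [real_inner_smul_left, real_inner_self_eq_norm_sq, sq, ← mul_assoc,
      inv_mul_cancel₀ (norm_ne_zero_iff.2 hy0), one_mul]
  have h1 : (inner ℝ v y : ℝ) ≤ b := (inner_le_suppFn hK hy).trans (hb v hv)
  have h2 : (inner ℝ (‖y‖⁻¹ • y - v) y : ℝ) ≤ δ * ‖y‖ :=
    (real_inner_le_norm _ _).trans (mul_le_mul_of_nonneg_right huv (norm_nonneg y))
  rw [inner_sub_left, hyy] at h2
  linarith

lemma suppFn_le_of_net {K L : Set V} (hK : IsCompact K) (hKne : K.Nonempty) (hL : IsCompact L)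
    (hLne : L.Nonempty) {RK RL : ℝ} (hRK : ∀ y ∈ K, ‖y‖ ≤ RK) (hRL : ∀ y ∈ L, ‖y‖ ≤ RL)
    {t : Set V} {δ η : ℝ} (hnet : ∀ u : V, ‖u‖ = 1 → ∃ v ∈ t, ‖u - v‖ ≤ δ)
    (h : ∀ v ∈ t, suppFn K v ≤ suppFn L v + η) (x : V) :
    suppFn K x ≤ suppFn L x + (η + (RK + RL) * δ) * ‖x‖ := by
  refine suppFn_le_add_mul_norm_of_sphere hK hKne hL hLne (fun u hu => ?_) x
  obtain ⟨v, hv, huv⟩ := hnet u hu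
  have hRK0 : 0 ≤ RK := (norm_nonneg _).trans (hRK _ hKne.some_mem)
  have hRL0 : 0 ≤ RL := (norm_nonneg _).trans (hRL _ hLne.some_mem)
  have hK1 : suppFn K u ≤ suppFn K v + RK * ‖u - v‖ := by
    simpa using (suppFn_add_le hK hKne v (u - v)).trans
      (add_le_add le_rfl (suppFn_le_mul_norm hKne hRK _))
  have hL1 : suppFn L v ≤ suppFn L u + RL * ‖u - v‖ := by
    simpa [norm_sub_rev] using (suppFn_add_le hL hLne u (v - u)).trans
      (add_le_add le_rfl (suppFn_le_mul_norm hLne hRL _))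
  nlinarith [h v hv, mul_le_mul_of_nonneg_left huv hRK0, mul_le_mul_of_nonneg_left huv hRL0]

open Metric in
lemma exists_mem_hausdorffDist_le [Nonempty Ξ] (hg : ∀ ξ, IsGauge (S ξ)) (hnz : ∀ ξ, S ξ ≠ {0})
    (hnd : Nondegenerate S) {C : Set (Set V)} (hCg : ∀ K ∈ C, IsGauge K)
    (hCS : Set.range S ⊆ C) (hCadd : ∀ K ∈ C, ∀ L ∈ C, K + L ∈ C)
    (hCsmul : ∀ K ∈ C, ∀ a : ℝ, 0 ≤ a → a • K ∈ C)
    (hCjoin : ∀ K ∈ C, ∀ L ∈ C, convexHull ℝ (K ∪ L) ∈ C) {T : Set V} (hT : IsGauge T)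
    (hTS : SupBound S T) {ε : ℝ} (hε : 0 < ε) : ∃ J ∈ C, hausdorffDist J T ≤ ε := by
  obtain ⟨ξ₀⟩ := ‹Nonempty Ξ›
  have hC0 : {0} ∈ C := by
    have := hCsmul _ (hCS ⟨ξ₀, rfl⟩) 0 le_rfl
    rwa [Set.zero_smul_set (hg ξ₀).nonempty] at this
  obtain ⟨R, hR⟩ := hT.1.isBounded.exists_norm_le
  have hR0 : 0 ≤ R := (norm_nonneg _).trans (hR 0 hT.2.2)
  set δ := ε / (2 * (3 * R + ε + 1))
  have hδ : 0 < δ := by positivity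
  have hδ_half : δ ≤ 1 / 2 := by
    rw [div_le_div_iff₀ (by positivity) two_pos]; nlinarith
  have hδε : (3 * R + ε) * δ ≤ ε / 2 := by
    rw [mul_div_assoc', div_le_div_iff₀ (by positivity) two_pos]; nlinarith
  obtain ⟨t, ht, htfin, hcover⟩ := finite_cover_balls_of_compact (isCompact_sphere (0 : V) 1) hδ
  have hnet : ∀ u : V, ‖u‖ = 1 → ∃ v ∈ t, ‖u - v‖ ≤ δ := fun u hu => by
    obtain ⟨v, hv, huv⟩ := Set.mem_iUnion₂.1 (hcover (mem_sphere_zero_iff_norm.2 hu))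
    exact ⟨v, hv, (dist_eq_norm u v ▸ mem_ball.1 huv).le⟩
  have ht1 : ∀ v ∈ t, ‖v‖ = 1 := fun v hv => mem_sphere_zero_iff_norm.1 (ht hv)
  have := htfin.fintype
  have happrox (v : t) := exists_mem_suppFn_approx hg hnz hnd hCg hCS hCadd hCsmul hT hTS
    ((↑) : t → V) (norm_ne_zero_iff.1 ((ht1 v v.2).trans_ne one_ne_zero)) (half_pos hε)
  choose K hKC hKup hKlow using happrox
  obtain ⟨J, hJC, hJ⟩ := exists_join_mem hCg hC0 hCjoin Finset.univ fun i _ => hKC i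
  have hJg := hCg J hJC
  have hJT : ∀ v ∈ t, suppFn J v ≤ suppFn T v + ε / 2 := fun v _ =>
    (hJ v).2 _ (add_nonneg (suppFn_nonneg hT v) (half_pos hε).le)
      fun i _ => (hKup i ⟨v, ‹_›⟩).le
  have hTJ : ∀ v ∈ t, suppFn T v ≤ suppFn J v + ε / 2 := fun v hv => by
    linarith [(hJ v).1 ⟨v, hv⟩ (Finset.mem_univ _), hKlow ⟨v, hv⟩]
  have hRJ : ∀ y ∈ J, ‖y‖ ≤ 2 * R + ε := fun y hy => by
    have := norm_le_of_net hJg.1 hnet (b := R + ε / 2) (by positivity) (fun v hv => by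
      have := suppFn_le_mul_norm hT.nonempty hR v
      rw [ht1 v hv, mul_one] at this
      linarith [hJT v hv]) hy
    nlinarith [norm_nonneg y]
  refine ⟨J, hJC, hausdorffDist_le_of_suppFn_le hJg hT hε.le (fun x => ?_) (fun x => ?_)⟩
  · refine (suppFn_le_of_net hJg.1 hJg.nonempty hT.1 hT.nonempty hRJ hR hnet hJT x).trans ?_
    gcongr; linarith
  · refine (suppFn_le_of_net hT.1 hT.nonempty hJg.1 hJg.nonempty hR hRJ hnet hTJ x).trans ?_
    gcongr; linarith

open Metric TopologicalSpace in
lemma IsHausdorffClosed.mem_of_forall_hausdorffDist_le {C : Set (Set V)}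
    (hC : IsHausdorffClosed C) (hCg : ∀ K ∈ C, IsGauge K) {T : Set V} (hT : IsCompact T)
    (hTne : T.Nonempty) (h : ∀ ε > 0, ∃ K ∈ C, hausdorffDist K T ≤ ε) : T ∈ C := by
  suffices (⟨⟨T, hT⟩, hTne⟩ : NonemptyCompacts V) ∈
      closure {K : NonemptyCompacts V | (K : Set V) ∈ C} from hC.closure_subset this
  refine Metric.mem_closure_iff.2 fun ε hε => ?_
  obtain ⟨K, hK, hKT⟩ := h (ε / 2) (half_pos hε)
  refine ⟨⟨⟨K, (hCg K hK).1⟩, (hCg K hK).nonempty⟩, hK, ?_⟩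
  rw [dist_comm, NonemptyCompacts.dist_eq]
  exact hKT.trans_lt (half_lt_self hε)

lemma mem_piUp_of_supBound [Nonempty Ξ] (hg : ∀ ξ, IsGauge (S ξ)) (hnz : ∀ ξ, S ξ ≠ {0})
    (hnd : Nondegenerate S) {T : Set V} (hT : IsGauge T) (hTS : SupBound S T) : T ∈ piUp (Set.range S) := by
  rintro C ⟨hCg, hCclosed, hCS, hCadd, hCsmul, hCjoin⟩
  exact hCclosed.mem_of_forall_hausdorffDist_le hCg hT.1 hT.nonempty fun ε hε =>
    exists_mem_hausdorffDist_le hg hnz hnd hCg hCS hCadd hCsmul hCjoin hT hTS hε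

end Gauge

theorem mem_piUp_iff_sup_bound_general {N : ℕ} {Ξ : Type*} [Nonempty Ξ]
    (S : Ξ → Set (EuclideanSpace ℝ (Fin N)))
    (hg : ∀ ξ, IsGauge (S ξ))
    (hnz : ∀ ξ, S ξ ≠ {0})
    (hnd : Nondegenerate S)
    (T : Set (EuclideanSpace ℝ (Fin N))) (hT : IsGauge T) :
    T ∈ piUp (Set.range S) ↔
      ∀ (n : ℕ) (x : Fin (n + 1) → EuclideanSpace ℝ (Fin N)),
        (∃ k, x k ≠ 0) →
        ∀ z : EuclideanSpace ℝ (Fin N),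
          suppFn T z ≤ (∑ k, suppFn T (x k)) *
            ⨆ ξ, suppFn (S ξ) z / ∑ k, suppFn (S ξ) (x k) := by
  exact ⟨supBound_of_mem_piUp hg hnz hnd, mem_piUp_of_supBound hg hnz hnd hT⟩

/-- **Theorem 4.1.**  For a nondegenerate family of nonzero symmetric gauges
`(S ξ)` in `ℝ^N`, a gauge `T` belongs to `π↑(Ξ)` iff for every `n ≥ 1`, all
vectors `x 0, …, x n` not all zero, and every `z`,
`h_T(z) ≤ (Σ_k h_T(x k)) · sup_ξ [h_{S ξ}(z) / Σ_k h_{S ξ}(x k)]`. -/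
theorem mem_piUp_iff_sup_bound {N : ℕ} {Ξ : Type*} [Nonempty Ξ]
    (S : Ξ → Set (EuclideanSpace ℝ (Fin N)))
    (hg : ∀ ξ, IsGauge (S ξ))
    (hnz : ∀ ξ, S ξ ≠ {0})
    (hsymm : ∀ ξ, S ξ = -S ξ)
    (hnd : Nondegenerate S)
    (T : Set (EuclideanSpace ℝ (Fin N))) (hT : IsGauge T) :
    T ∈ piUp (Set.range S) ↔
      ∀ (n : ℕ) (x : Fin (n + 1) → EuclideanSpace ℝ (Fin N)),
        (∃ k, x k ≠ 0) →
        ∀ z : EuclideanSpace ℝ (Fin N),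
          suppFn T z ≤ (∑ k, suppFn T (x k)) *
            ⨆ ξ, suppFn (S ξ) z / ∑ k, suppFn (S ξ) (x k) :=
  mem_piUp_iff_sup_bound_general S hg hnz hnd T hT
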